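/- (Radon–Nikodym, converse part) Let φ, ψ be α-completely positive maps from G to L(H) with ψ ≤_u φ (there exists λ > 0 such that λφ − ψ is α-completely positive). Then there exists a unique positive operator T on H_φ commuting with every π_φ(g) and with J_φ, such that ψ(g) = V_φ* T π_φ(g) V_φ for all g ∈ G. -/

import Mathlib

open scoped ComplexOrder

noncomputable section

def IsInvolution (G : Type*) [Group G] (α : G → G) : Prop :=
  (∀ g, α (α g) = g) ∧ α 1 = 1 ∧ ∀ g : G, α g⁻¹ = (α g)⁻¹

def IsAlphaCP {G : Type*} [Group G] (α : G → G)
    {H : Type*} [NormedAddCommGroup H] [InnerProductSpace ℂ H] [CompleteSpace H]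
    (φ : G → H →L[ℂ] H) : Prop :=
  (∀ g₁ g₂ : G, φ (α g₁ * α g₂) = φ (α (g₁ * g₂)) ∧ φ (α (g₁ * g₂)) = φ (g₁ * g₂)) ∧
  (∀ (n : ℕ) (g : Fin n → G) (ξ : Fin n → H),
    0 ≤ ∑ i, ∑ j, (inner ℂ (φ ((α (g i))⁻¹ * g j) (ξ j)) (ξ i) : ℂ)) ∧
  (∃ K > (0 : ℝ), ∀ (n : ℕ) (g : Fin n → G) (ξ : Fin n → H),
    ∑ i, ∑ j, (inner ℂ (((ContinuousLinearMap.adjoint (φ (g i))) ∘L φ (g j)) (ξ j)) (ξ i) : ℂ) ≤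
      (K : ℂ) * ∑ i, ∑ j, (inner ℂ (φ ((α (g i))⁻¹ * g j) (ξ j)) (ξ i) : ℂ)) ∧
  (∀ g : G, ∃ M > (0 : ℝ), ∀ (n : ℕ) (gs : Fin n → G) (ξ : Fin n → H),
    ∑ i, ∑ j, (inner ℂ (φ ((α (g * gs i))⁻¹ * (g * gs j)) (ξ j)) (ξ i) : ℂ) ≤
      (M : ℂ) * ∑ i, ∑ j, (inner ℂ (φ ((α (gs i))⁻¹ * gs j) (ξ j)) (ξ i) : ℂ))

structure KreinDilation (G : Type*) [Group G] (α : G → G)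
    (H : Type*) [NormedAddCommGroup H] [InnerProductSpace ℂ H] [CompleteSpace H]
    (φ : G → H →L[ℂ] H) where
  K : Type
  [nK : NormedAddCommGroup K]
  [iK : InnerProductSpace ℂ K]
  [cK : CompleteSpace K]
  J : K →L[ℂ] K
  rep : G → K →L[ℂ] K
  V : H →L[ℂ] K
  J_sa : ContinuousLinearMap.adjoint J = J
  J_inv : J ∘L J = 1
  rep_one : rep 1 = 1
  rep_mul : ∀ g g', rep (g * g') = rep g ∘L rep g'
  rep_inv : ∀ g, rep g⁻¹ = J ∘L (ContinuousLinearMap.adjoint (rep g)) ∘L J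
  eq : ∀ g, φ g = (ContinuousLinearMap.adjoint V) ∘L rep g ∘L V
  minimal : (Submodule.span ℂ {x : K | ∃ g ξ, x = rep g (V ξ)}).topologicalClosure = ⊤
  commJ : ∀ g, J ∘L rep g ∘L V = rep (α g) ∘L V

attribute [instance] KreinDilation.nK KreinDilation.iK KreinDilation.cK

/-!
On finitely supported `f h : G →₀ H` the kernel `Σ ⟪f x, ψ ((α x)⁻¹ y) (h y)⟫` is a positive
sesquilinear form. For `φ` it is the Gram form of the vectors `Σ π(x) V (f x)`, which are dense
in `H_φ`; domination `ψ ≤ λ φ` and Cauchy–Schwarz bound the `ψ`-form by `λ` times the norms of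
these vectors, so it is represented by a bounded operator `T` on `H_φ`. The matrix coefficients
`⟪π(y) V η, T π(x) V ξ⟫ = ⟪η, ψ ((α y)⁻¹ x) ξ⟫` give positivity, both commutation relations and
`ψ = V* T π V`; conversely, these properties force the same coefficients, which determine `T`.
-/

open ContinuousLinearMap ComplexConjugate

theorem ContinuousLinearMap.isPositive_of_inner_nonneg {E : Type*} [NormedAddCommGroup E]
    [InnerProductSpace ℂ E] {T : E →L[ℂ] E} (h : ∀ x, 0 ≤ @inner ℂ _ _ x (T x)) :
    T.IsPositive := by
  refine (isPositive_iff_complex T).2 fun x => ?_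
  obtain ⟨hre, him⟩ := Complex.nonneg_iff.mp (h x)
  rw [← inner_conj_symm, RCLike.re_to_complex, Complex.conj_re]
  exact ⟨Complex.ext rfl (by simp only [Complex.ofReal_im, Complex.conj_im, ← him, neg_zero]), hre⟩

namespace LinearMap

variable {M : Type*} [AddCommGroup M] [Module ℂ M]

theorem conj_apply_of_nonneg (B : M →ₗ⋆[ℂ] M →ₗ[ℂ] ℂ) (hB : ∀ x, 0 ≤ B x x) (x y : M) :
    conj (B y x) = B x y := by
  have him : ∀ z, (B z z).im = 0 := fun z => (Complex.nonneg_iff.mp (hB z)).2.symm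
  have hsum := him (x + y)
  have hrot := him (x + Complex.I • y)
  simp only [map_add, map_smulₛₗ, LinearMap.add_apply, LinearMap.smul_apply, smul_eq_mul,
    RingHom.id_apply, Complex.conj_I, Complex.add_im, Complex.add_re, Complex.mul_im,
    Complex.mul_re, Complex.neg_re, Complex.neg_im, Complex.I_re, Complex.I_im, him x, him y]
    at hsum hrot
  apply Complex.ext <;> simp only [Complex.conj_re, Complex.conj_im] <;> linarith

theorem norm_apply_sq_le_of_nonneg (B : M →ₗ⋆[ℂ] M →ₗ[ℂ] ℂ) (hB : ∀ x, 0 ≤ B x x) (x y : M) :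
    ‖B x y‖ ^ 2 ≤ (B x x).re * (B y y).re := by
  let core : PreInnerProductSpace.Core ℂ M :=
    { inner := fun x y => B x y
      conj_inner_symm := conj_apply_of_nonneg B hB
      re_inner_nonneg := fun x => (Complex.nonneg_iff.mp (hB x)).1
      add_left := fun x y z => by simp only [map_add, LinearMap.add_apply]
      smul_left := fun x y r => by simp only [map_smulₛₗ, LinearMap.smul_apply, smul_eq_mul] }
  have h : ‖B x y‖ * ‖B y x‖ ≤ (B x x).re * (B y y).re :=
    InnerProductSpace.Core.inner_mul_inner_self_le (c := core) x y
  rwa [← conj_apply_of_nonneg B hB y x, Complex.norm_conj, ← sq] at h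

end LinearMap

section DenseRange

variable {𝕜 M K : Type*} [RCLike 𝕜] [AddCommGroup M] [Module 𝕜 M]
  [NormedAddCommGroup K] [InnerProductSpace 𝕜 K] {e : M →ₗ[𝕜] K}

local notation "⟪" x ", " y "⟫" => @inner 𝕜 _ _ x y

theorem ContinuousLinearMap.ext_inner_of_denseRange (he : DenseRange e) {A B : K →L[𝕜] K}
    (h : ∀ x y, ⟪e x, A (e y)⟫ = ⟪e x, B (e y)⟫) : A = B := by
  have hrange : ∀ y, A (e y) = B (e y) := fun y =>
    ext_inner_left 𝕜 fun v => congrFun (he.equalizer (continuous_id.inner continuous_const)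
      (continuous_id.inner continuous_const) (funext fun x => h x y)) v
  exact ContinuousLinearMap.coeFn_injective
    (he.equalizer A.continuous B.continuous (funext hrange))

theorem ContinuousLinearMap.exists_inner_apply_eq_of_denseRange [CompleteSpace K]
    (he : DenseRange e) (B : M →ₗ⋆[𝕜] M →ₗ[𝕜] 𝕜) {C : ℝ} (hC : 0 ≤ C)
    (hB : ∀ x y, ‖B x y‖ ≤ C * ‖e x‖ * ‖e y‖) :
    ∃ T : K →L[𝕜] K, ∀ x y, ⟪e x, T (e y)⟫ = B x y := by
  have hBx : ∀ x, ∃ C', ∀ y, ‖B x y‖ ≤ C' * ‖e y‖ := fun x => ⟨C * ‖e x‖, hB x⟩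
  have hext : ∀ x y, (B x).extendOfNorm e (e y) = B x y := fun x y =>
    LinearMap.extendOfNorm_eq he (hBx x) y
  let Φ : M →ₗ⋆[𝕜] K →L[𝕜] 𝕜 :=
    { toFun := fun x => (B x).extendOfNorm e
      map_add' := fun x x' => LinearMap.extendOfNorm_unique he _ (hB (x + x')) _ <| by
        ext y; simp [hext]
      map_smul' := fun c x => LinearMap.extendOfNorm_unique he _ (hB (c • x)) _ <| by
        ext y; simp [hext] }
  have hΦ : ∀ x, ‖Φ x‖ ≤ C * ‖e x‖ := fun x =>
    LinearMap.opNorm_extendOfNorm_le he (by positivity) (hB x)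
  refine ⟨adjoint (InnerProductSpace.continuousLinearMapOfBilin (Φ.extendOfNorm e)),
    fun x y => ?_⟩
  rw [adjoint_inner_right, InnerProductSpace.continuousLinearMapOfBilin_apply,
    LinearMap.extendOfNorm_eq he ⟨C, hΦ⟩]
  exact hext x y

end DenseRange

section KernelForm

variable {G : Type*} [Group G] {α : G → G}
  {H : Type*} [NormedAddCommGroup H] [InnerProductSpace ℂ H] {χ : G → H →L[ℂ] H}

local notation "⟪" x ", " y "⟫" => @inner ℂ _ _ x y

variable (α) in
/-- `kernelForm α χ f h = ∑ x ∈ f.support, ∑ y ∈ h.support, ⟪f x, χ ((α x)⁻¹ * y) (h y)⟫`. -/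
def kernelForm (χ : G → H →L[ℂ] H) : (G →₀ H) →ₗ⋆[ℂ] (G →₀ H) →ₗ[ℂ] ℂ :=
  Finsupp.lsum ℂ fun x =>
    (innerₛₗ ℂ).compl₂ (Finsupp.lsum ℂ fun y => (χ ((α x)⁻¹ * y) : H →ₗ[ℂ] H))

@[simp]
theorem kernelForm_single_single (x y : G) (ξ η : H) :
    kernelForm α χ (Finsupp.single x ξ) (Finsupp.single y η) = ⟪ξ, χ ((α x)⁻¹ * y) η⟫ := by
  simp [kernelForm]

theorem kernelForm_apply_self (f : G →₀ H) :
    kernelForm α χ f f = ∑ x ∈ f.support, ∑ y ∈ f.support, ⟪f x, χ ((α x)⁻¹ * y) (f y)⟫ := by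
  simp [kernelForm, Finsupp.sum]

theorem kernelForm_smul_sub (c : ℂ) (φ ψ : G → H →L[ℂ] H) :
    kernelForm α (fun g => c • φ g - ψ g) = c • kernelForm α φ - kernelForm α ψ :=
  Finsupp.lhom_ext fun x ξ => Finsupp.lhom_ext fun y η => by simp

variable [CompleteSpace H]

theorem IsAlphaCP.apply_alpha_mul_alpha (hχ : IsAlphaCP α χ) (g₁ g₂ : G) :
    χ (α g₁ * α g₂) = χ (g₁ * g₂) :=
  (hχ.1 g₁ g₂).1.trans (hχ.1 g₁ g₂).2

theorem IsAlphaCP.apply_alpha (hχ : IsAlphaCP α χ) (g : G) : χ (α g) = χ g := by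
  simpa using (hχ.1 g 1).2

theorem IsAlphaCP.apply_alpha_inv_mul (hα : IsInvolution G α) (hχ : IsAlphaCP α χ) (x y : G) :
    χ (α (y⁻¹ * α x)) = χ ((α y)⁻¹ * x) := by
  rw [hχ.apply_alpha, ← hα.2.2, ← hχ.apply_alpha_mul_alpha, hα.1]

theorem IsAlphaCP.sum_inner_nonneg (hχ : IsAlphaCP α χ) (s : Finset G) (ξ : G → H) :
    0 ≤ ∑ x ∈ s, ∑ y ∈ s, ⟪χ ((α x)⁻¹ * y) (ξ y), ξ x⟫ := by
  have h := hχ.2.1 s.card (fun i => s.equivFin.symm i) (fun i => ξ (s.equivFin.symm i))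
  simp only [← Finset.sum_coe_sort s]
  rw [← Equiv.sum_comp s.equivFin.symm]
  exact h.trans_eq <| Finset.sum_congr rfl fun i _ =>
    Fintype.sum_equiv s.equivFin.symm _ _ fun _ => rfl

theorem IsAlphaCP.kernelForm_self_nonneg (hχ : IsAlphaCP α χ) (f : G →₀ H) :
    0 ≤ kernelForm α χ f f := by
  rw [kernelForm_apply_self, ← star_nonneg_iff]
  simpa only [star_sum, Complex.star_def, inner_conj_symm] using hχ.sum_inner_nonneg f.support f

end KernelForm

namespace KreinDilation

variable {G : Type*} [Group G] {α : G → G}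
  {H : Type*} [NormedAddCommGroup H] [InnerProductSpace ℂ H] [CompleteSpace H]
  {φ : G → H →L[ℂ] H} (D : KreinDilation G α H φ)

local notation "⟪" x ", " y "⟫" => @inner ℂ _ _ x y

def linearCombination : (G →₀ H) →ₗ[ℂ] D.K :=
  Finsupp.lsum ℂ fun g => ((D.rep g ∘L D.V : H →L[ℂ] D.K) : H →ₗ[ℂ] D.K)

@[simp]
theorem linearCombination_single (g : G) (ξ : H) :
    D.linearCombination (Finsupp.single g ξ) = D.rep g (D.V ξ) := by
  simp [linearCombination]

theorem denseRange_linearCombination : DenseRange D.linearCombination := by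
  have hspan : Submodule.span ℂ {x : D.K | ∃ g ξ, x = D.rep g (D.V ξ)} ≤
      LinearMap.range D.linearCombination := by
    rw [Submodule.span_le]
    rintro _ ⟨g, ξ, rfl⟩
    exact ⟨Finsupp.single g ξ, D.linearCombination_single g ξ⟩
  have hclosure := Submodule.topologicalClosure_mono hspan
  rw [D.minimal, top_le_iff, ← Submodule.dense_iff_topologicalClosure_eq_top] at hclosure
  rwa [DenseRange, ← LinearMap.coe_range]

theorem J_J_apply (u : D.K) : D.J (D.J u) = u := by
  simpa using congr($(D.J_inv) u)

theorem inner_J_right (u v : D.K) : ⟪u, D.J v⟫ = ⟪D.J u, v⟫ := by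
  rw [← adjoint_inner_right, D.J_sa]

theorem J_rep_V (g : G) (ξ : H) : D.J (D.rep g (D.V ξ)) = D.rep (α g) (D.V ξ) := by
  simpa using congr($(D.commJ g) ξ)

theorem adjoint_rep (g : G) : adjoint (D.rep g) = D.J ∘L D.rep g⁻¹ ∘L D.J := by
  ext u
  simp [D.rep_inv, J_J_apply]

theorem rep_rep_V (g x : G) (ξ : H) : D.rep g (D.rep x (D.V ξ)) = D.rep (g * x) (D.V ξ) := by
  rw [D.rep_mul]; rfl

theorem adjoint_rep_rep_V (x y : G) (ξ : H) :
    adjoint (D.rep y) (D.rep x (D.V ξ)) = D.rep (α (y⁻¹ * α x)) (D.V ξ) := by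
  simp only [adjoint_rep, comp_apply, J_rep_V, rep_rep_V]

theorem ext_inner_rep_V {A B : D.K →L[ℂ] D.K}
    (h : ∀ x ξ y η, ⟪D.rep y (D.V η), A (D.rep x (D.V ξ))⟫ =
      ⟪D.rep y (D.V η), B (D.rep x (D.V ξ))⟫) : A = B := by
  have hform :
      ((innerₛₗ ℂ).comp D.linearCombination).compl₂ (A.toLinearMap ∘ₗ D.linearCombination) =
        ((innerₛₗ ℂ).comp D.linearCombination).compl₂ (B.toLinearMap ∘ₗ D.linearCombination) :=
    Finsupp.lhom_ext fun y η => Finsupp.lhom_ext fun x ξ => by simpa using h x ξ y η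
  exact ext_inner_of_denseRange D.denseRange_linearCombination fun f h => congr($hform f h)

def IsRadonNikodymDeriv (ψ : G → H →L[ℂ] H) (T : D.K →L[ℂ] D.K) : Prop :=
  ∀ x ξ y η, ⟪D.rep y (D.V η), T (D.rep x (D.V ξ))⟫ = ⟪η, ψ ((α y)⁻¹ * x) ξ⟫

variable {D} {ψ : G → H →L[ℂ] H} {T : D.K →L[ℂ] D.K}

theorem IsRadonNikodymDeriv.unique {T' : D.K →L[ℂ] D.K} (hT : D.IsRadonNikodymDeriv ψ T)
    (hT' : D.IsRadonNikodymDeriv ψ T') : T = T' :=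
  D.ext_inner_rep_V fun x ξ y η => by rw [hT, hT']

theorem IsRadonNikodymDeriv.inner_linearCombination (hT : D.IsRadonNikodymDeriv ψ T)
    (f h : G →₀ H) : ⟪D.linearCombination f, T (D.linearCombination h)⟫ = kernelForm α ψ f h := by
  have hform :
      ((innerₛₗ ℂ).comp D.linearCombination).compl₂ (T.toLinearMap ∘ₗ D.linearCombination) =
        kernelForm α ψ :=
    Finsupp.lhom_ext fun y η => Finsupp.lhom_ext fun x ξ => by simpa using hT x ξ y η
  exact congr($hform f h)

theorem isRadonNikodymDeriv_of_commute (hα : IsInvolution G α) (hψ : IsAlphaCP α ψ)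
    (hrep : ∀ g, T ∘L D.rep g = D.rep g ∘L T) (hJ : T ∘L D.J = D.J ∘L T)
    (hV : ∀ g, ψ g = adjoint D.V ∘L T ∘L D.rep g ∘L D.V) : D.IsRadonNikodymDeriv ψ T := by
  intro x ξ y η
  have hrep' : ∀ g u, T (D.rep g u) = D.rep g (T u) := fun g u => congr($(hrep g) u)
  have hJ' : ∀ u, T (D.J u) = D.J (T u) := fun u => congr($hJ u)
  have hadj : ∀ u, adjoint (D.rep y) (T u) = T (adjoint (D.rep y) u) := fun u => by
    simp only [D.adjoint_rep, comp_apply, hrep', hJ']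
  rw [← adjoint_inner_right, hadj, D.adjoint_rep_rep_V, ← adjoint_inner_right,
    ← hψ.apply_alpha_inv_mul hα, hV]
  rfl

variable (D) in
theorem isRadonNikodymDeriv_one (hα : IsInvolution G α) (hφ : IsAlphaCP α φ) :
    D.IsRadonNikodymDeriv φ 1 :=
  isRadonNikodymDeriv_of_commute hα hφ (fun _ => by ext; simp) (by ext; simp)
    fun g => by ext; simp [D.eq]

theorem norm_kernelForm_le (hα : IsInvolution G α) (hφ : IsAlphaCP α φ) (hψ : IsAlphaCP α ψ)
    {l : ℝ} (hl : 0 ≤ l) (hcp : IsAlphaCP α fun g => (l : ℂ) • φ g - ψ g) (f h : G →₀ H) :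
    ‖kernelForm α ψ f h‖ ≤ l * ‖D.linearCombination f‖ * ‖D.linearCombination h‖ := by
  have hdiag : ∀ f, (kernelForm α ψ f f).re ≤ l * ‖D.linearCombination f‖ ^ 2 := fun f => by
    have hφf := (D.isRadonNikodymDeriv_one hα hφ).inner_linearCombination f f
    have h0 := (Complex.nonneg_iff.mp (hcp.kernelForm_self_nonneg f)).1
    rw [one_apply_eq_self, inner_self_eq_norm_sq_to_K] at hφf
    simp only [kernelForm_smul_sub, LinearMap.sub_apply, LinearMap.smul_apply, ← hφf] at h0
    simpa [← Complex.ofReal_pow] using h0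
  have hcs := LinearMap.norm_apply_sq_le_of_nonneg _ hψ.kernelForm_self_nonneg f h
  refine le_of_pow_le_pow_left₀ two_ne_zero (by positivity) (hcs.trans ?_)
  have hf := (Complex.nonneg_iff.mp (hψ.kernelForm_self_nonneg f)).1
  calc (kernelForm α ψ f f).re * (kernelForm α ψ h h).re
      ≤ (l * ‖D.linearCombination f‖ ^ 2) * (l * ‖D.linearCombination h‖ ^ 2) :=
        mul_le_mul (hdiag f) (hdiag h) (Complex.nonneg_iff.mp (hψ.kernelForm_self_nonneg h)).1
          (hf.trans (hdiag f))
    _ = (l * ‖D.linearCombination f‖ * ‖D.linearCombination h‖) ^ 2 := by ring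

theorem exists_isRadonNikodymDeriv (hα : IsInvolution G α) (hφ : IsAlphaCP α φ)
    (hψ : IsAlphaCP α ψ) {l : ℝ} (hl : 0 ≤ l) (hcp : IsAlphaCP α fun g => (l : ℂ) • φ g - ψ g) :
    ∃ T, D.IsRadonNikodymDeriv ψ T := by
  obtain ⟨T, hT⟩ := exists_inner_apply_eq_of_denseRange D.denseRange_linearCombination _ hl
    (D.norm_kernelForm_le hα hφ hψ hl hcp)
  exact ⟨T, fun x ξ y η => by simpa using hT (Finsupp.single y η) (Finsupp.single x ξ)⟩

theorem IsRadonNikodymDeriv.isPositive (hψ : IsAlphaCP α ψ) (hT : D.IsRadonNikodymDeriv ψ T) :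
    T.IsPositive := by
  refine isPositive_of_inner_nonneg fun v => D.denseRange_linearCombination.induction_on v
    (isClosed_le continuous_const (by fun_prop)) fun f => ?_
  rw [hT.inner_linearCombination]
  exact hψ.kernelForm_self_nonneg f

theorem IsRadonNikodymDeriv.comp_rep (hα : IsInvolution G α) (hT : D.IsRadonNikodymDeriv ψ T)
    (g : G) : T ∘L D.rep g = D.rep g ∘L T :=
  D.ext_inner_rep_V fun x ξ y η => by
    rw [comp_apply, rep_rep_V, hT, comp_apply, ← adjoint_inner_left (D.rep g),
      adjoint_rep_rep_V, hT, hα.1, mul_inv_rev, inv_inv, mul_assoc]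

theorem IsRadonNikodymDeriv.comp_J (hα : IsInvolution G α) (hψ : IsAlphaCP α ψ)
    (hT : D.IsRadonNikodymDeriv ψ T) : T ∘L D.J = D.J ∘L T :=
  D.ext_inner_rep_V fun x ξ y η => by
    rw [comp_apply, J_rep_V, hT, comp_apply, inner_J_right, J_rep_V, hT, hα.1, ← hα.2.2,
      hψ.apply_alpha_mul_alpha]

theorem IsRadonNikodymDeriv.eq_adjoint_V_comp (hα : IsInvolution G α)
    (hT : D.IsRadonNikodymDeriv ψ T) (g : G) : ψ g = adjoint D.V ∘L T ∘L D.rep g ∘L D.V := by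
  ext ξ
  refine ext_inner_left ℂ fun η => ?_
  have hη : D.V η = D.rep 1 (D.V η) := by simp [D.rep_one]
  rw [comp_apply, adjoint_inner_right, comp_apply, comp_apply, hη, hT, hα.2.1, inv_one, one_mul]

end KreinDilation

open ContinuousLinearMap in
theorem radon_nikodym_converse {G : Type*} [Group G] (α : G → G)
    {H : Type*} [NormedAddCommGroup H] [InnerProductSpace ℂ H] [CompleteSpace H]
    (φ ψ : G → H →L[ℂ] H) (hα : IsInvolution G α)
    (hφ : IsAlphaCP α φ) (hψ : IsAlphaCP α ψ)
    (D : KreinDilation G α H φ)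
    (hdom : ∃ l > (0 : ℝ), IsAlphaCP α (fun g => (l : ℂ) • φ g - ψ g)) :
    ∃! T : D.K →L[ℂ] D.K,
      T.IsPositive ∧
      (∀ g : G, T ∘L D.rep g = D.rep g ∘L T) ∧
      T ∘L D.J = D.J ∘L T ∧
      ∀ g : G, ψ g = adjoint D.V ∘L T ∘L D.rep g ∘L D.V := by
  obtain ⟨l, hl, hcp⟩ := hdom
  obtain ⟨T, hT⟩ := D.exists_isRadonNikodymDeriv hα hφ hψ hl.le hcp
  refine ⟨T, ⟨hT.isPositive hψ, hT.comp_rep hα, hT.comp_J hα hψ, hT.eq_adjoint_V_comp hα⟩, ?_⟩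
  rintro T' ⟨-, hrep, hJ, hV⟩
  exact (KreinDilation.isRadonNikodymDeriv_of_commute hα hψ hrep hJ hV).unique hT
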